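/- arXiv:1501.06015 — 2 statements merged into one kernel-verified Lean document; each statement's English description precedes it below -/
import Mathlib

section
/- Suppose f* : [0,∞) → ℝ satisfies (f*)''' + (1/2) f* (f*)'' = 0 with f*(0)=0, (f*)'(0)=P*, (f*)''(0)=c, and (f*)'(η*) → L as η*→∞, where L + P* > 0. Set λ = (L + P*)^{1/2}. Then f(η) = λ^{-1} f*(λ^{-1} η) satisfies f''' + (1/2) f f'' = 0, f(0)=0, f'(0) = λ^{-2} P*, f''(0) = λ^{-3} c, and f'(η) → 1 − λ^{-2} P* as η → ∞; i.e., f solves the moving-wall problem with parameter P = λ^{-2} P*. -/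
open Real Filter Set

lemma scale_deriv (g : ℝ → ℝ) (hg : Differentiable ℝ g) (c a : ℝ) :
    deriv (fun x => c * g (a * x)) = fun x => (c * a) * deriv g (a * x) := by
  funext x
  have h1 : HasDerivAt (fun x : ℝ => g (a * x)) (deriv g (a * x) * a) x :=
    (hg (a * x)).hasDerivAt.comp x (by simpa using (hasDerivAt_id x).const_mul a)
  rw [(h1.const_mul c).deriv]; ring

/-- Non-iterative transformation method for the moving-wall Blasius problem:
with `λ = (L + P*)^{1/2}`, the rescaled IVP solution solves the moving-wall
problem with parameter `P = λ⁻² P*`. -/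
theorem moving_wall_nonITM (fs : ℝ → ℝ) (hfs : ContDiff ℝ (⊤ : ℕ∞) fs) (Ps c L : ℝ)
    (hode : ∀ η ∈ Ici (0:ℝ),
      deriv (deriv (deriv fs)) η + (1/2) * fs η * deriv (deriv fs) η = 0)
    (h0 : fs 0 = 0) (h1 : deriv fs 0 = Ps) (h2 : deriv (deriv fs) 0 = c)
    (hlim : Tendsto (deriv fs) atTop (nhds L)) (hLP : 0 < L + Ps) :
    let l : ℝ := Real.sqrt (L + Ps)
    let f : ℝ → ℝ := fun η => l⁻¹ * fs (l⁻¹ * η)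
    (∀ η ∈ Ici (0:ℝ),
      deriv (deriv (deriv f)) η + (1/2) * f η * deriv (deriv f) η = 0) ∧
    f 0 = 0 ∧
    deriv f 0 = l⁻¹ ^ 2 * Ps ∧
    deriv (deriv f) 0 = l⁻¹ ^ 3 * c ∧
    Tendsto (deriv f) atTop (nhds (1 - l⁻¹ ^ 2 * Ps)) := by
  intro l f
  have hl : 0 < l := Real.sqrt_pos.mpr hLP
  have hl0 : l ≠ 0 := ne_of_gt hl
  have hl2 : l ^ 2 = L + Ps := Real.sq_sqrt hLP.le
  have hfs1 : Differentiable ℝ fs := hfs.differentiable (by simp)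
  have hfs' : ContDiff ℝ (⊤:ℕ∞) fs := hfs.of_le (by simp)
  have c1 : ContDiff ℝ (⊤:ℕ∞) (deriv fs) := (contDiff_infty_iff_deriv.mp hfs').2
  have c2 : ContDiff ℝ (⊤:ℕ∞) (deriv (deriv fs)) := (contDiff_infty_iff_deriv.mp c1).2
  have hf : f = fun η => l⁻¹ * fs (l⁻¹ * η) := rfl
  have e1 : deriv f = fun η => (l⁻¹ * l⁻¹) * deriv fs (l⁻¹ * η) := by
    rw [hf]; exact scale_deriv fs hfs1 _ _
  have e2 : deriv (deriv f)
      = fun η => (l⁻¹ * l⁻¹ * l⁻¹) * deriv (deriv fs) (l⁻¹ * η) := by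
    rw [e1]; exact scale_deriv (deriv fs) (c1.differentiable (by simp)) _ _
  have e3 : deriv (deriv (deriv f))
      = fun η => (l⁻¹ * l⁻¹ * l⁻¹ * l⁻¹) * deriv (deriv (deriv fs)) (l⁻¹ * η) := by
    rw [e2]; exact scale_deriv (deriv (deriv fs)) (c2.differentiable (by simp)) _ _
  refine ⟨?_, ?_, ?_, ?_, ?_⟩
  · intro η hη
    have hmem : l⁻¹ * η ∈ Ici (0:ℝ) :=
      mul_nonneg (inv_nonneg.mpr hl.le) hη
    have := hode (l⁻¹ * η) hmem
    rw [e3, e2, hf]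
    simp only
    linear_combination (l⁻¹ * l⁻¹ * l⁻¹ * l⁻¹) * this
  · simp [hf, h0]
  · rw [e1]; show l⁻¹ * l⁻¹ * deriv fs (l⁻¹ * 0) = _; rw [mul_zero, h1]; ring
  · rw [e2]; show l⁻¹ * l⁻¹ * l⁻¹ * deriv (deriv fs) (l⁻¹ * 0) = _; rw [mul_zero, h2]; ring
  · have htend : Tendsto (fun η : ℝ => l⁻¹ * η) atTop atTop :=
      Tendsto.const_mul_atTop (inv_pos.mpr hl) tendsto_id
    have key : (l⁻¹ * l⁻¹) * L = 1 - l⁻¹ ^ 2 * Ps := by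
      field_simp
      nlinarith [hl2]
    rw [e1]
    have := (hlim.comp htend).const_mul (l⁻¹ * l⁻¹)
    rw [key] at this
    exact this
end

section
/- If f solves f''' + f f'' = 0 on [0,∞) with f'(0) = 0, f''(0) > 0, f(0) = −P f''(0) for some P ≥ 0, and f'(η) → 1 as η → ∞, then f' is nonnegative and strictly increasing on [0,∞) (since f''(η) = f''(0) exp(−∫₀^η f) > 0), and in particular 0 ≤ f'(η) < 1 for all η. -/
open Real Filter Set

/-- For the surface-gasification problem with `P ≥ 0`, the velocity `f'` is
nonnegative and strictly increasing on `[0,∞)`, and `0 ≤ f' < 1`. -/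
theorem surface_gasification_velocity_monotone (P : ℝ) (hP : 0 ≤ P)
    (f : ℝ → ℝ) (hf : ContDiff ℝ (⊤ : ℕ∞) f)
    (hode : ∀ η ∈ Ici (0:ℝ),
      deriv (deriv (deriv f)) η + f η * deriv (deriv f) η = 0)
    (h1 : deriv f 0 = 0) (h2 : 0 < deriv (deriv f) 0)
    (h0 : f 0 = -P * deriv (deriv f) 0)
    (hlim : Tendsto (deriv f) atTop (nhds 1)) :
    (∀ η ∈ Ici (0:ℝ), 0 ≤ deriv f η) ∧
    StrictMonoOn (deriv f) (Ici (0:ℝ)) ∧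
    (∀ η ∈ Ici (0:ℝ), deriv f η < 1) := by
  have hfc : Continuous f := hf.continuous
  have hf' : ContDiff ℝ ((⊤:ℕ∞) : WithTop ℕ∞) f := hf.of_le (by simp)
  have hf1 : ContDiff ℝ ((⊤:ℕ∞) : WithTop ℕ∞) (deriv f) := (contDiff_infty_iff_deriv.mp hf').2
  have hf2 : ContDiff ℝ ((⊤:ℕ∞) : WithTop ℕ∞) (deriv (deriv f)) := (contDiff_infty_iff_deriv.mp hf1).2
  set F : ℝ → ℝ := fun η => ∫ t in (0:ℝ)..η, f t with hFdef
  have hFd : ∀ x : ℝ, HasDerivAt F (f x) x := by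
    intro x
    exact intervalIntegral.integral_hasDerivAt_right
      (hfc.intervalIntegrable _ _)
      (hfc.stronglyMeasurableAtFilter _ _) hfc.continuousAt
  set g : ℝ → ℝ := fun x => deriv (deriv f) x * Real.exp (F x) with hgdef
  have hgd : ∀ x : ℝ, HasDerivAt g
      ((deriv (deriv (deriv f)) x + f x * deriv (deriv f) x) * Real.exp (F x)) x := by
    intro x
    have hd2 : HasDerivAt (deriv (deriv f)) (deriv (deriv (deriv f)) x) x :=
      (hf2.differentiable (by simp) x).hasDerivAt
    have hexp : HasDerivAt (fun y => Real.exp (F y)) (f x * Real.exp (F x)) x := by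
      simpa [mul_comm] using (hFd x).exp
    have := hd2.mul hexp
    exact this.congr_deriv (by ring)
  have hgc : ∀ x ∈ Ici (0:ℝ), g x = g 0 := by
    intro x hx
    rcases eq_or_lt_of_le (mem_Ici.mp hx) with h | h
    · rw [← h]
    · have := constant_of_has_deriv_right_zero (f := g) (a := 0) (b := x)
        (fun y _ => ((hgd y).continuousAt).continuousWithinAt)
        (fun y hy => by
          have hy0 : y ∈ Ici (0:ℝ) := hy.1
          have := hgd y
          rw [hode y hy0, zero_mul] at this
          exact this.hasDerivWithinAt)
      exact this x ⟨hx, le_rfl⟩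
  have hF0 : F 0 = 0 := by simp [hFdef]
  have hg0 : g 0 = deriv (deriv f) 0 := by simp [hgdef, hF0]
  have hpos : ∀ x ∈ Ici (0:ℝ), 0 < deriv (deriv f) x := by
    intro x hx
    have hgx : deriv (deriv f) x * Real.exp (F x) = deriv (deriv f) 0 := by
      have := hgc x hx
      rw [hg0] at this
      exact this
    nlinarith [Real.exp_pos (F x), h2]
  have hmono : StrictMonoOn (deriv f) (Ici (0:ℝ)) := by
    apply strictMonoOn_of_deriv_pos (convex_Ici 0) hf1.continuous.continuousOn
    intro x hx
    rw [interior_Ici] at hx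
    exact hpos x (mem_Ici.mpr (le_of_lt hx))
  have hnonneg : ∀ η ∈ Ici (0:ℝ), 0 ≤ deriv f η := by
    intro η hη
    rcases eq_or_lt_of_le (mem_Ici.mp hη) with h | h
    · rw [← h, h1]
    · have := hmono (self_mem_Ici) hη h
      rw [h1] at this
      exact this.le
  have hle : ∀ x ∈ Ici (0:ℝ), deriv f x ≤ 1 := by
    intro x hx
    refine ge_of_tendsto hlim ?_
    filter_upwards [eventually_ge_atTop x] with t ht
    rcases eq_or_lt_of_le ht with h | h
    · rw [h]
    · exact (hmono hx (hx.trans ht) h).le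
  refine ⟨hnonneg, hmono, fun η hη => ?_⟩
  have h1' : deriv f η < deriv f (η + 1) :=
    hmono hη (by exact mem_Ici.mpr (le_trans (mem_Ici.mp hη) (by linarith))) (lt_add_one η)
  exact lt_of_lt_of_le h1' (hle (η + 1) (mem_Ici.mpr (le_trans (mem_Ici.mp hη) (by linarith))))
end
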